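/- arXiv:2605.19508 — 6 statements merged into one kernel-verified Lean document; each statement's English description precedes it below -/
import Mathlib

section
/- Let G be a finite simple graph, let C be a longest cycle of G with a fixed orientation, and let h be a vertex of G not on C with N_G(h) ⊆ V(C). Let U = {v⁺ : v ∈ N_G(h)} be the set of successors along C of the neighbors of h. Then U ∪ {h} is an independent set of G. -/
open SimpleGraph Set

/-- `G` has no induced subgraph isomorphic to `P₂ ∪ kP₁`: there are no `k+2` distinct
vertices `x, y, z₁, …, z_k` with `xy ∈ E(G)` and no other edges among them. -/
def P2kP1Free {V : Type*} (G : SimpleGraph V) (k : ℕ) : Prop :=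
  ¬ ∃ (x y : V) (z : Fin k → V),
      Function.Injective z ∧ (∀ i, z i ≠ x) ∧ (∀ i, z i ≠ y) ∧ x ≠ y ∧
      G.Adj x y ∧ (∀ i, ¬ G.Adj x (z i)) ∧ (∀ i, ¬ G.Adj y (z i)) ∧
      ∀ i j, ¬ G.Adj (z i) (z j)

/-- `X` is an independent set of `G`. -/
def IsIndep {V : Type*} (G : SimpleGraph V) (X : Set V) : Prop :=
  ∀ x ∈ X, ∀ y ∈ X, ¬ G.Adj x y

/-- The neighbourhood `N_G(S) = ⋃_{x ∈ S} (N_G(x) \ S)` of a set `S`. -/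
def setNbhd {V : Type*} (G : SimpleGraph V) (S : Set V) : Set V :=
  {v | v ∉ S ∧ ∃ u ∈ S, G.Adj u v}

/-- `G` is 1-tough: `|S| ≥ ω(G - S)` whenever `ω(G - S) ≥ 2`. -/
def OneTough {V : Type*} (G : SimpleGraph V) : Prop :=
  ∀ S : Set V, 2 ≤ Nat.card (G.induce Sᶜ).ConnectedComponent →
    Nat.card (G.induce Sᶜ).ConnectedComponent ≤ S.ncard

/-- `G` is `m`-connected: `|V(G)| > m` and `G - S` is connected for every `S` with `|S| < m`. -/
def MConnected {V : Type*} (G : SimpleGraph V) (m : ℕ) : Prop :=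
  m < Nat.card V ∧ ∀ S : Set V, S.ncard < m → (G.induce Sᶜ).Connected

/-- A cycle of `G` with a fixed orientation, given as an injective cyclic sequence of
`n ≥ 3` pairwise adjacent-in-sequence vertices; the successor of `f i` is `f (i + 1)`. -/
def IsCycleMap {V : Type*} (G : SimpleGraph V) {n : ℕ} (f : ZMod n → V) : Prop :=
  3 ≤ n ∧ Function.Injective f ∧ ∀ i, G.Adj (f i) (f (i + 1))

/-- A longest cycle of `G`. -/
def IsLongestCycleMap {V : Type*} (G : SimpleGraph V) {n : ℕ} (f : ZMod n → V) : Prop :=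
  IsCycleMap G f ∧ ∀ (m : ℕ) (g : ZMod m → V), IsCycleMap G g → m ≤ n

/-- `G` is hamiltonian: it has a cycle passing through all of its vertices. -/
def IsHamiltonianGraph {V : Type*} (G : SimpleGraph V) : Prop :=
  ∃ (n : ℕ) (f : ZMod n → V), IsCycleMap G f ∧ ∀ v, v ∈ Set.range f

/-- The cycle `f` is an edge-dominating cycle of `G`: every connected component of
`G - V(C)` consists of exactly one vertex. -/
def IsEdgeDomCycle {V : Type*} (G : SimpleGraph V) {n : ℕ} (f : ZMod n → V) : Prop :=
  IsCycleMap G f ∧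
    ∀ c : (G.induce (Set.range f)ᶜ).ConnectedComponent, Nat.card c.supp = 1

/-- The number of edges of `G` between two disjoint sets `S` and `T`. -/
noncomputable def eBetween {V : Type*} (G : SimpleGraph V) (S T : Set V) : ℕ :=
  {p : V × V | p.1 ∈ S ∧ p.2 ∈ T ∧ G.Adj p.1 p.2}.ncard


lemma insertCycle {V : Type*} (G : SimpleGraph V) {n : ℕ} {f : ZMod n → V}
    (hf : IsCycleMap G f) {h : V} (hh : h ∉ Set.range f) {i : ZMod n}
    (h1 : G.Adj h (f i)) (h2 : G.Adj h (f (i + 1))) :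
    ∃ g : ZMod (n + 1) → V, IsCycleMap G g := by
  obtain ⟨hn3, hinj, hadj⟩ := hf
  haveI : NeZero n := ⟨by omega⟩
  have hone : (1 : ZMod (n+1)).val = 1 := ZMod.val_one'' (by omega)
  refine ⟨fun k => if k.val = n then h else f (i + 1 + (k.val : ZMod n)), ?_, ?_, ?_⟩
  · omega
  · intro k k' hkk'
    simp only at hkk'
    apply ZMod.val_injective
    split_ifs at hkk' with a b b
    · omega
    · exact absurd ⟨_, hkk'.symm⟩ hh
    · exact absurd ⟨_, hkk'⟩ hh
    · have hk := ZMod.val_lt k; have hk' := ZMod.val_lt k'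
      have := hinj hkk'
      have h1 : ((k.val : ZMod n)) = (k'.val : ZMod n) := by
        have := add_left_cancel this; exact this
      have := congrArg ZMod.val h1
      rwa [ZMod.val_cast_of_lt (by omega), ZMod.val_cast_of_lt (by omega)] at this
  · intro k
    have hk := ZMod.val_lt k
    have hvadd : (k + 1).val = if k.val = n then 0 else k.val + 1 := by
      split_ifs with a
      · have : k = (n : ZMod (n+1)) := by
          apply ZMod.val_injective; rw [a, ZMod.val_cast_of_lt (by omega)]
        rw [this]
        have : ((n : ZMod (n+1)) + 1) = 0 := by
          have h0 : (((n+1 : ℕ)) : ZMod (n+1)) = 0 := ZMod.natCast_self _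
          push_cast at h0; exact h0
        rw [this, ZMod.val_zero]
      · rw [ZMod.val_add_of_lt (by omega), hone]
    simp only
    by_cases a : k.val = n
    · -- g k = h, g(k+1) = f (i+1+0)
      rw [if_pos a, hvadd, if_pos a]
      simp only [Nat.cast_zero, if_neg (by omega : ¬ (0:ℕ) = n), add_zero]
      exact h2
    · rw [if_neg a, hvadd, if_neg a]
      by_cases b : k.val + 1 = n
      · rw [if_pos b]
        have : ((k.val : ZMod n)) = -1 := by
          have : ((k.val : ZMod n)) + 1 = 0 := by
            have h0 : (((k.val+1 : ℕ)) : ZMod n) = 0 := by rw [b]; exact ZMod.natCast_self n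
            push_cast at h0; exact h0
          linear_combination this
        rw [this]
        have : i + 1 + -1 = i := by ring
        rw [this]
        exact h1.symm
      · rw [if_neg b, Nat.cast_add, Nat.cast_one, ← add_assoc]
        exact hadj _

lemma crossCycle {V : Type*} (G : SimpleGraph V) {n : ℕ} {f : ZMod n → V}
    (hf : IsCycleMap G f) {h : V} (hh : h ∉ Set.range f) {i j : ZMod n}
    (hi : G.Adj h (f i)) (hj : G.Adj h (f j)) (hij : i ≠ j)
    (he : G.Adj (f (i + 1)) (f (j + 1))) :
    ∃ g : ZMod (n + 1) → V, IsCycleMap G g := by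
  obtain ⟨hn3, hinj, hadj⟩ := hf
  haveI : NeZero n := ⟨by omega⟩
  have hone : (1 : ZMod (n+1)).val = 1 := ZMod.val_one'' (by omega)
  set d : ℕ := (i - j).val with hd
  have hd0 : 0 < d := by
    rcases Nat.eq_zero_or_pos d with h0 | h0
    · exfalso; apply hij
      have : i - j = 0 := by
        apply ZMod.val_injective; rw [← hd, h0, ZMod.val_zero]
      linear_combination this
    · exact h0
  have hdn : d < n := ZMod.val_lt _
  have hcast : ((d : ℕ) : ZMod n) = i - j := ZMod.natCast_zmod_val _
  set σ : ℕ → ZMod n := fun t => if t ≤ d then i - ((t - 1 : ℕ) : ZMod n)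
    else i + ((t - d : ℕ) : ZMod n) with hσ
  have hσinj : ∀ t t', 1 ≤ t → t ≤ n → 1 ≤ t' → t' ≤ n → σ t = σ t' → t = t' := by
    intro t t' ht1 htn ht1' htn' hs
    simp only [hσ] at hs
    split_ifs at hs with a b b
    · have h1 : ((t - 1 : ℕ) : ZMod n) = ((t' - 1 : ℕ) : ZMod n) := by
        linear_combination -hs
      have h2 := congrArg ZMod.val h1
      rw [ZMod.val_cast_of_lt (by omega), ZMod.val_cast_of_lt (by omega)] at h2
      omega
    · exfalso
      have h1 : (((t - 1) + (t' - d) : ℕ) : ZMod n) = 0 := by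
        push_cast
        linear_combination -hs
      have h2 := (ZMod.natCast_eq_zero_iff _ _).mp h1
      have h3 := Nat.le_of_dvd (by omega) h2
      omega
    · exfalso
      have h1 : (((t' - 1) + (t - d) : ℕ) : ZMod n) = 0 := by
        push_cast
        linear_combination hs
      have h2 := (ZMod.natCast_eq_zero_iff _ _).mp h1
      have h3 := Nat.le_of_dvd (by omega) h2
      omega
    · have h1 : ((t - d : ℕ) : ZMod n) = ((t' - d : ℕ) : ZMod n) := add_left_cancel hs
      have h2 := congrArg ZMod.val h1
      rw [ZMod.val_cast_of_lt (by omega), ZMod.val_cast_of_lt (by omega)] at h2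
      omega
  refine ⟨fun k => if k.val = 0 then h else f (σ k.val), ?_, ?_, ?_⟩
  · omega
  · intro k k' hkk'
    simp only at hkk'
    apply ZMod.val_injective
    have hk := ZMod.val_lt k; have hk' := ZMod.val_lt k'
    split_ifs at hkk' with a b b
    · omega
    · exact absurd ⟨_, hkk'.symm⟩ hh
    · exact absurd ⟨_, hkk'⟩ hh
    · exact hσinj _ _ (by omega) (by omega) (by omega) (by omega) (hinj hkk')
  · intro k
    have hk := ZMod.val_lt k
    have hvadd : (k + 1).val = if k.val = n then 0 else k.val + 1 := by
      split_ifs with a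
      · have hkn : k = (n : ZMod (n+1)) := by
          apply ZMod.val_injective; rw [a, ZMod.val_cast_of_lt (by omega)]
        rw [hkn]
        have h0 : (((n+1 : ℕ)) : ZMod (n+1)) = 0 := ZMod.natCast_self _
        push_cast at h0
        rw [h0, ZMod.val_zero]
      · rw [ZMod.val_add_of_lt (by omega), hone]
    simp only
    rcases Nat.eq_zero_or_pos k.val with a | a
    · -- g k = h, g (k+1) = f (σ 1) = f i
      rw [a, if_neg (by omega : ¬ (0:ℕ) = n)] at hvadd
      rw [if_pos a, hvadd, if_neg (by omega)]
      have : σ (0 + 1) = i := by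
        simp only [hσ]
        rw [if_pos (by omega)]
        norm_num
      rw [this]; exact hi
    · rw [if_neg (by omega)]
      by_cases b : k.val = n
      · -- g k = f j, g (k+1) = h
        rw [hvadd, if_pos b, if_pos rfl]
        have : σ k.val = j := by
          simp only [hσ, b]
          rw [if_neg (by omega), Nat.cast_sub (by omega), hcast, ZMod.natCast_self]
          ring
        rw [this]; exact hj.symm
      · rw [hvadd, if_neg b, if_neg (by omega)]
        by_cases c : k.val < d
        · have h1 : σ k.val = (i - (k.val : ZMod n)) + 1 := by
            simp only [hσ]
            rw [if_pos (by omega), Nat.cast_sub (by omega), Nat.cast_one]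
            ring
          have h2 : σ (k.val + 1) = i - (k.val : ZMod n) := by
            simp only [hσ]
            rw [if_pos (by omega)]
            norm_num
          rw [h1, h2]; exact (hadj _).symm
        · by_cases e : k.val = d
          · have h1 : σ k.val = j + 1 := by
              simp only [hσ, e]
              rw [if_pos le_rfl, Nat.cast_sub (by omega), hcast, Nat.cast_one]
              ring
            have h2 : σ (k.val + 1) = i + 1 := by
              simp only [hσ, e]
              rw [if_neg (by omega)]
              norm_num
            rw [h1, h2]; exact he.symm
          · have h1 : σ (k.val + 1) = σ k.val + 1 := by
              simp only [hσ]
              rw [if_neg (by omega), if_neg (by omega),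
                show k.val + 1 - d = (k.val - d) + 1 by omega]
              push_cast
              ring
            rw [h1]; exact hadj _

/-- Claim 3.1 of the proof: if `C` is a longest cycle, `h ∉ V(C)` with
`N_G(h) ⊆ V(C)`, and `U` is the set of successors on `C` of neighbours of `h`, then
`U ∪ {h}` is independent. -/
theorem stmt_3 {V : Type*} [Fintype V] (G : SimpleGraph V) (n : ℕ) (f : ZMod n → V)
    (hC : IsLongestCycleMap G f) (h : V) (hh : h ∉ Set.range f)
    (hNh : G.neighborSet h ⊆ Set.range f)
    (U : Set V) (hU : U = {w | ∃ i : ZMod n, G.Adj h (f i) ∧ w = f (i + 1)}) :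
    IsIndep G (U ∪ {h}) := by
  obtain ⟨hcyc, hmax⟩ := hC
  have key : ¬ ∃ g : ZMod (n + 1) → V, IsCycleMap G g := by
    rintro ⟨g, hg⟩
    have := hmax _ g hg
    omega
  subst hU
  intro x hx y hy hxy
  rcases hx with hx | hx
  · obtain ⟨i, hi, rfl⟩ := hx
    rcases hy with hy | hy
    · obtain ⟨j, hj, rfl⟩ := hy
      by_cases e : i = j
      · exact hxy.ne (by rw [e])
      · exact key (crossCycle G hcyc hh hi hj e hxy)
    · rw [Set.mem_singleton_iff] at hy
      subst hy
      exact key (insertCycle G hcyc hh hi hxy.symm)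
  · rw [Set.mem_singleton_iff] at hx
    subst hx
    rcases hy with hy | hy
    · obtain ⟨j, hj, rfl⟩ := hy
      exact key (insertCycle G hcyc hh hj hxy)
    · rw [Set.mem_singleton_iff] at hy
      subst hy
      exact hxy.ne rfl
end

section
/- Let k ≥ 1 be an integer, let G be a finite simple (P₂ ∪ kP₁)-free graph, and let U ⊆ V(G) be an independent set with |U| ≥ k. Then the set V(G) ∖ N_G(U) is independent in G. -/
open SimpleGraph Set

/-- part of Claim 3.1: if `G` is `(P₂ ∪ kP₁)`-free and `U` is an
independent set with `|U| ≥ k`, then `V(G) \ N_G(U)` is independent. -/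
theorem stmt_4 {V : Type*} [Fintype V] (k : ℕ) (hk : 1 ≤ k) (G : SimpleGraph V)
    (hfree : P2kP1Free G k) (U : Set V) (hU : IsIndep G U) (hcard : k ≤ U.ncard) :
    IsIndep G (setNbhd G U)ᶜ := by
  intro x hx y hy hxy
  have hxU : x ∉ U := by
    intro hxU
    by_cases hyU : y ∈ U
    · exact hU x hxU y hyU hxy
    · exact hy ⟨hyU, x, hxU, hxy⟩
  have hyU : y ∉ U := by
    intro hyU
    exact hx ⟨hxU, y, hyU, hxy.symm⟩
  have hadjx : ∀ u ∈ U, ¬ G.Adj u x := fun u hu h => hx ⟨hxU, u, hu, h⟩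
  have hadjy : ∀ u ∈ U, ¬ G.Adj u y := fun u hu h => hy ⟨hyU, u, hu, h⟩
  obtain ⟨t, htU, htc⟩ := Set.exists_subset_card_eq hcard
  have htfin : t.Finite := Set.toFinite t
  have : Nat.card t = k := by rwa [Nat.card_coe_set_eq]
  have e : t ≃ Fin k := Finite.equivFinOfCardEq this
  set z : Fin k → V := fun i => ((e.symm i : t) : V) with hz
  have hzmem : ∀ i, z i ∈ U := fun i => htU (e.symm i).2
  apply hfree
  refine ⟨x, y, z, ?_, ?_, ?_, ?_, hxy, ?_, ?_, ?_⟩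
  · exact Subtype.val_injective.comp e.symm.injective
  · exact fun i h => hxU (h ▸ hzmem i)
  · exact fun i h => hyU (h ▸ hzmem i)
  · exact G.ne_of_adj hxy
  · exact fun i h => hadjx (z i) (hzmem i) h.symm
  · exact fun i h => hadjy (z i) (hzmem i) h.symm
  · exact fun i j => hU (z i) (hzmem i) (z j) (hzmem j)
end

section
/- Let k ≥ 2 be an integer, let G be a finite simple graph that is 1-tough and (P₂ ∪ kP₁)-free, and let U ⊆ V(G) be an independent set with |U| ≥ k. Then 2|N_G(U)| ≥ |V(G)|. -/
open SimpleGraph Set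

/-- inequality (3.1): if `G` is 1-tough and `(P₂ ∪ kP₁)`-free and `U`
is an independent set with `|U| ≥ k`, then `2|N_G(U)| ≥ |V(G)|`. -/
theorem stmt_5 {V : Type*} [Fintype V] (k : ℕ) (hk : 2 ≤ k) (G : SimpleGraph V)
    (htough : OneTough G) (hfree : P2kP1Free G k)
    (U : Set V) (hU : IsIndep G U) (hcard : k ≤ U.ncard) :
    Nat.card V ≤ 2 * (setNbhd G U).ncard := by
  classical
  set N := setNbhd G U with hN
  have hUN : U ⊆ Nᶜ := fun u hu hmem => hmem.1 hu
  -- the induced graph on Nᶜ has no edges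
  have hedgeless : ∀ a b : ↥(Nᶜ), ¬ (G.induce Nᶜ).Adj a b := by
    rintro ⟨a, ha⟩ ⟨b, hb⟩ hab
    have hab' : G.Adj a b := hab
    by_cases haU : a ∈ U
    · by_cases hbU : b ∈ U
      · exact hU a haU b hbU hab'
      · exact hb ⟨hbU, a, haU, hab'⟩
    · by_cases hbU : b ∈ U
      · exact ha ⟨haU, b, hbU, hab'.symm⟩
      · -- both outside U and outside N: build an induced P₂ ∪ kP₁
        have hUcard : k ≤ Fintype.card ↥U := by
          rwa [← Nat.card_eq_fintype_card, Nat.card_coe_set_eq]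
        obtain ⟨e⟩ : Nonempty (Fin k ↪ ↥U) :=
          Function.Embedding.nonempty_of_card_le (by simpa using hUcard)
        have haN : ∀ u ∈ U, ¬ G.Adj u a := by
          intro u hu hadj; exact ha ⟨haU, u, hu, hadj⟩
        have hbN : ∀ u ∈ U, ¬ G.Adj u b := by
          intro u hu hadj; exact hb ⟨hbU, u, hu, hadj⟩
        refine hfree ⟨a, b, fun i => (e i : V), ?_, ?_, ?_, hab'.ne, hab', ?_, ?_, ?_⟩
        · intro i j hij
          exact e.injective (Subtype.ext hij)
        · intro i h; exact haU (h ▸ (e i).2)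
        · intro i h; exact hbU (h ▸ (e i).2)
        · intro i hadj; exact haN (e i) (e i).2 hadj.symm
        · intro i hadj; exact hbN (e i) (e i).2 hadj.symm
        · intro i j hadj; exact hU (e i) (e i).2 (e j) (e j).2 hadj
  -- the number of components equals |Nᶜ|
  have hbij : Function.Bijective
      (fun v : ↥(Nᶜ) => (G.induce Nᶜ).connectedComponentMk v) := by
    constructor
    · intro a b h
      obtain ⟨w⟩ := SimpleGraph.ConnectedComponent.exact h
      cases w with
      | nil => rfl
      | cons h' _ => exact absurd h' (hedgeless _ _)
    · intro c
      obtain ⟨v, rfl⟩ := c.exists_rep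
      exact ⟨v, rfl⟩
  have hcomp : Nat.card (G.induce Nᶜ).ConnectedComponent = (Nᶜ : Set V).ncard := by
    rw [← Nat.card_eq_of_bijective _ hbij, Nat.card_coe_set_eq]
  have hUle : k ≤ (Nᶜ : Set V).ncard :=
    le_trans hcard (Set.ncard_le_ncard hUN (Set.toFinite _))
  have h2 : 2 ≤ Nat.card (G.induce Nᶜ).ConnectedComponent := by
    rw [hcomp]; exact le_trans hk hUle
  have htough' := htough N h2
  rw [hcomp] at htough'
  have hsum : N.ncard + (Nᶜ : Set V).ncard = Nat.card V :=
    Set.ncard_add_ncard_compl N (Set.toFinite _) (Set.toFinite _)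
  omega
end

section
/- Let k ≥ 4 be an integer and let G be a finite simple (P₂ ∪ kP₁)-free graph with minimum degree δ(G) ≥ k. Let C be a longest cycle of G with a fixed orientation, let h be a vertex of G not on C with N_G(h) ⊆ V(C), and let U = {v⁺ : v ∈ N_G(h)}. Then N_G(U) ⊆ V(C); equivalently, no vertex outside C has a neighbor in U. -/
open SimpleGraph Set

lemma no_extension {V : Type*} (G : SimpleGraph V) {n : ℕ} {f : ZMod n → V}
    (hC : IsLongestCycleMap G f) {h : V} (hh : h ∉ Set.range f)
    (i j : ZMod n) (hi : G.Adj h (f i)) (hj : G.Adj h (f j))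
    (r : ℕ) (hr : r ≤ 1) (w : V)
    (hwf : r = 1 → w ∉ Set.range f) (hwh : r = 1 → w ≠ h)
    (hiw : r = 1 → G.Adj (f (i + 1)) w)
    (hwrap : G.Adj (if r = 1 then w else f (i + 1)) (if i = j then h else f (j + 1))) :
    False := by
  obtain ⟨⟨hn3, hfinj, hfadj⟩, hmax⟩ := hC
  haveI : NeZero n := ⟨by omega⟩
  haveI : NeZero (n + 1 + r) := ⟨by omega⟩
  set a : ℕ := (i - j).val with ha_def
  have ha : a < n := ZMod.val_lt _
  have hacast : ((a : ℕ) : ZMod n) = i - j := by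
    rw [ha_def, ZMod.natCast_val, ZMod.cast_id]
  have ha0 : a = 0 ↔ i = j := by rw [ha_def, ZMod.val_eq_zero, sub_eq_zero]
  have hcastinj : ∀ x y : ℕ, x < n → y < n → ((x : ℕ) : ZMod n) = y → x = y := by
    intro x y hx hy hxy
    rw [← ZMod.val_cast_of_lt hx, ← ZMod.val_cast_of_lt hy, hxy]
  have hcast0 : ∀ x : ℕ, 0 < x → x < n → ((x : ℕ) : ZMod n) ≠ 0 := by
    intro x hx0 hxn hx
    have := hcastinj x 0 hxn (by omega) (by simpa using hx)
    omega
  have hvlt : ∀ t : ZMod (n + 1 + r), t.val < n + 1 + r := fun t => ZMod.val_lt t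
  have hvsucc : ∀ t : ZMod (n + 1 + r), (t + 1).val = if t.val = n + r then 0 else t.val + 1 := by
    intro t
    haveI : Fact (1 < n + 1 + r) := ⟨by omega⟩
    rw [ZMod.val_add, ZMod.val_one]
    split_ifs with h1
    · rw [h1, show n + r + 1 = n + 1 + r by omega, Nat.mod_self]
    · exact Nat.mod_eq_of_lt (by have := hvlt t; omega)
  set g : ZMod (n + 1 + r) → V := fun t =>
    if t.val < a then f (j + 1 + (t.val : ZMod n))
    else if t.val = a then h
    else if t.val ≤ n then f (j - ((t.val - a - 1 : ℕ) : ZMod n))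
    else w with hg_def
  have harg_n : j - ((n - a - 1 : ℕ) : ZMod n) = i + 1 := by
    have h1 : ((n - a - 1 : ℕ) : ZMod n) = -(a : ZMod n) - 1 := by
      rw [Nat.sub_sub, Nat.cast_sub (by omega), Nat.cast_add, Nat.cast_one, ZMod.natCast_self]
      ring
    rw [h1, hacast]; ring
  have hinj : Function.Injective g := by
    intro t s hts
    have hbt := hvlt t
    have hbs := hvlt s
    apply ZMod.val_injective
    simp only [hg_def] at hts
    split_ifs at hts with h1 h2 h3 h4 h5 h6 h7 h8 h9 h10 h11 h12
    · have := hfinj hts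
      have : ((t.val : ℕ) : ZMod n) = (s.val : ℕ) := by linear_combination this
      exact hcastinj _ _ (by omega) (by omega) this
    · exact absurd ⟨_, hts⟩ hh
    · have := hfinj hts
      have hkey : ((t.val + (s.val - a - 1) + 1 : ℕ) : ZMod n) = 0 := by
        push_cast
        linear_combination this
      exact absurd hkey (hcast0 _ (by omega) (by omega))
    · exact absurd ⟨_, hts⟩ (hwf (by omega))
    · exact absurd ⟨_, hts.symm⟩ hh
    · omega
    · exact absurd ⟨_, hts.symm⟩ hh
    · exact absurd (hwh (by omega)) (fun hne => hne hts.symm)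
    · have := hfinj hts
      have hkey : ((s.val + (t.val - a - 1) + 1 : ℕ) : ZMod n) = 0 := by
        push_cast
        linear_combination -this
      exact absurd hkey (hcast0 _ (by omega) (by omega))
    · exact absurd ⟨_, hts⟩ hh
    · have := hfinj hts
      have : ((t.val - a - 1 : ℕ) : ZMod n) = ((s.val - a - 1 : ℕ) : ZMod n) := by
        linear_combination -this
      have := hcastinj _ _ (by omega) (by omega) this
      omega
    · exact absurd ⟨_, hts⟩ (hwf (by omega))
    · exact absurd ⟨_, hts.symm⟩ (hwf (by omega))
    · exact absurd (hwh (by omega)) (fun hne => hne hts)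
    · exact absurd ⟨_, hts.symm⟩ (hwf (by omega))
    · omega
  have hadj : ∀ t, G.Adj (g t) (g (t + 1)) := by
    intro t
    have hbt := hvlt t
    have hsucc := hvsucc t
    simp only [hg_def]
    by_cases hwrapc : t.val = n + r
    · rw [if_pos hwrapc] at hsucc
      rw [hsucc]
      have hwr := hwrap
      have hright : (if (0:ℕ) < a then f (j + 1 + ((0:ℕ) : ZMod n))
          else if (0:ℕ) = a then h
          else if (0:ℕ) ≤ n then f (j - ((0 - a - 1 : ℕ) : ZMod n)) else w)
          = (if i = j then h else f (j + 1)) := by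
        by_cases hij : i = j
        · have ha' : a = 0 := ha0.mpr hij
          rw [if_pos hij, if_neg (by omega : ¬ (0:ℕ) < a), if_pos (by omega : (0:ℕ) = a)]
        · have ha' : a ≠ 0 := fun h0 => hij (ha0.mp h0)
          rw [if_neg hij, if_pos (by omega : (0:ℕ) < a), Nat.cast_zero, add_zero]
      rw [hright]
      rcases (by omega : r = 0 ∨ r = 1) with rfl | rfl
      · rw [if_neg (by omega), if_neg (by omega), if_pos (by omega),
          show t.val = n by omega, harg_n]
        rw [if_neg (by norm_num : ¬ (0:ℕ) = 1)] at hwr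
        exact hwr
      · rw [if_neg (by omega), if_neg (by omega), if_neg (by omega)]
        rw [if_pos rfl] at hwr
        exact hwr
    · rw [if_neg hwrapc] at hsucc
      rw [hsucc]
      rcases lt_trichotomy (t.val + 1) a with hc | hc | hc
      · rw [if_pos (by omega), if_pos hc]
        have : j + 1 + ((t.val + 1 : ℕ) : ZMod n) = (j + 1 + (t.val : ZMod n)) + 1 := by
          push_cast; ring
        rw [this]
        exact hfadj _
      · rw [if_pos (by omega), if_neg (by omega), if_pos hc]
        have : j + 1 + ((t.val : ℕ) : ZMod n) = i := by
          have h1 : ((t.val : ℕ) : ZMod n) = (a : ZMod n) - 1 := by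
            rw [show t.val = a - 1 by omega, Nat.cast_sub (by omega), Nat.cast_one]
          rw [h1, hacast]; ring
        rw [this]
        exact hi.symm
      · by_cases hta : t.val = a
        · rw [if_neg (by omega), if_pos hta, if_neg (by omega), if_neg (by omega),
            if_pos (by omega)]
          have : ((t.val + 1 - a - 1 : ℕ) : ZMod n) = 0 := by
            rw [show t.val + 1 - a - 1 = 0 by omega]; simp
          rw [this, sub_zero]
          exact hj
        · by_cases htn : t.val + 1 ≤ n
          · rw [if_neg (by omega), if_neg hta, if_pos (by omega), if_neg (by omega),
              if_neg (by omega), if_pos htn]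
            have h1 : ((t.val + 1 - a - 1 : ℕ) : ZMod n) = ((t.val - a - 1 : ℕ) : ZMod n) + 1 := by
              rw [show t.val + 1 - a - 1 = (t.val - a - 1) + 1 by omega]
              push_cast; ring
            have h2 : j - ((t.val - a - 1 : ℕ) : ZMod n)
                = (j - ((t.val + 1 - a - 1 : ℕ) : ZMod n)) + 1 := by
              rw [h1]; ring
            rw [h2]
            exact (hfadj _).symm
          · have hr1 : r = 1 := by omega
            have htv : t.val = n := by omega
            rw [if_neg (by omega), if_neg hta, if_pos (by omega), if_neg (by omega),
              if_neg (by omega), if_neg (by omega)]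
            rw [htv, harg_n]
            exact hiw hr1
  have := hmax (n + 1 + r) g ⟨by omega, hinj, hadj⟩
  omega

/-- the "moreover" part of Claim 3.1: with `C` a longest cycle,
`h ∉ V(C)`, `N_G(h) ⊆ V(C)` and `U` the successors of the neighbours of `h`, we have
`N_G(U) ⊆ V(C)`. -/
theorem stmt_6 {V : Type*} [Fintype V] (k : ℕ) (hk : 4 ≤ k) (G : SimpleGraph V)
    (hfree : P2kP1Free G k) (hdeg : ∀ v : V, k ≤ (G.neighborSet v).ncard)
    (n : ℕ) (f : ZMod n → V) (hC : IsLongestCycleMap G f)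
    (h : V) (hh : h ∉ Set.range f) (hNh : G.neighborSet h ⊆ Set.range f)
    (U : Set V) (hU : U = {w | ∃ i : ZMod n, G.Adj h (f i) ∧ w = f (i + 1)}) :
    setNbhd G U ⊆ Set.range f := by
  classical
  intro v hv
  by_contra hvC
  obtain ⟨hvU, u, huU, hadj⟩ := hv
  have huU' := huU
  rw [hU] at huU'
  obtain ⟨i0, hi0, rfl⟩ := huU'
  -- v ≠ h
  have hvh : v ≠ h := by
    rintro rfl
    exact no_extension G hC hh i0 i0 hi0 hi0 0 (by norm_num) v
      (fun c => absurd c (by norm_num)) (fun c => absurd c (by norm_num))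
      (fun c => absurd c (by norm_num))
      (by rw [if_neg (by norm_num : ¬ (0:ℕ) = 1), if_pos rfl]; exact hadj)
  -- h not adjacent to v
  have hhv : ¬ G.Adj h v := by
    intro hcon
    exact no_extension G hC hh i0 i0 hi0 hi0 1 le_rfl v (fun _ => hvC) (fun _ => hvh)
      (fun _ => hadj) (by rw [if_pos rfl, if_pos rfl]; exact hcon.symm)
  -- U is independent
  have hUindep : ∀ i1 j1 : ZMod n, G.Adj h (f i1) → G.Adj h (f j1) →
      ¬ G.Adj (f (i1 + 1)) (f (j1 + 1)) := by
    intro i1 j1 h1 h2 hcon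
    have hne : i1 ≠ j1 := by rintro rfl; exact hcon.ne rfl
    exact no_extension G hC hh i1 j1 h1 h2 0 (by norm_num) v
      (fun c => absurd c (by norm_num)) (fun c => absurd c (by norm_num))
      (fun c => absurd c (by norm_num))
      (by rw [if_neg (by norm_num : ¬ (0:ℕ) = 1), if_neg hne]; exact hcon)
  -- h is not adjacent to any vertex of U
  have hUh : ∀ i1 : ZMod n, G.Adj h (f i1) → ¬ G.Adj h (f (i1 + 1)) := by
    intro i1 h1 hcon
    exact no_extension G hC hh i1 i1 h1 h1 0 (by norm_num) v
      (fun c => absurd c (by norm_num)) (fun c => absurd c (by norm_num))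
      (fun c => absurd c (by norm_num))
      (by rw [if_neg (by norm_num : ¬ (0:ℕ) = 1), if_pos rfl]; exact hcon.symm)
  -- v is adjacent to at most one vertex of U
  have hvone : ∀ j1 : ZMod n, G.Adj h (f j1) → G.Adj v (f (j1 + 1)) → j1 = i0 := by
    intro j1 h1 h2
    by_contra hne
    exact no_extension G hC hh i0 j1 hi0 h1 1 le_rfl v (fun _ => hvC) (fun _ => hvh)
      (fun _ => hadj)
      (by rw [if_pos rfl, if_neg (fun hc => hne hc.symm)]; exact h2)
  -- combined independence of {h} ∪ U
  have hindep : ∀ x ∈ insert h U, ∀ y ∈ insert h U, ¬ G.Adj x y := by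
    have key : ∀ y ∈ U, ¬ G.Adj h y := by
      intro y hy
      rw [hU] at hy
      obtain ⟨j1, hj1, rfl⟩ := hy
      exact hUh j1 hj1
    intro x hx y hy hcon
    rcases Set.mem_insert_iff.mp hx with hx' | hx' <;>
      rcases Set.mem_insert_iff.mp hy with hy' | hy'
    · exact hcon.ne (hx'.trans hy'.symm)
    · exact key y hy' (by rwa [hx'] at hcon)
    · exact key x hx' (by rw [hy'] at hcon; exact hcon.symm)
    · rw [hU] at hx' hy'
      obtain ⟨i1, hi1, rfl⟩ := hx'
      obtain ⟨j1, hj1, rfl⟩ := hy'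
      exact hUindep i1 j1 hi1 hj1 hcon
  have hfinj : Function.Injective f := hC.1.2.1
  have hUrange : U ⊆ Set.range f := by
    rw [hU]; rintro x ⟨i1, -, rfl⟩; exact ⟨_, rfl⟩
  -- cardinality of U
  set A : Set (ZMod n) := {i1 | G.Adj h (f i1)} with hA
  have hNA : G.neighborSet h = f '' A := by
    ext x
    constructor
    · intro hx
      obtain ⟨i1, rfl⟩ := hNh hx
      exact ⟨i1, hx, rfl⟩
    · rintro ⟨i1, hi1, rfl⟩
      exact hi1
  have hUA : U = (fun i1 : ZMod n => f (i1 + 1)) '' A := by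
    rw [hU]
    ext x
    constructor
    · rintro ⟨i1, h1, rfl⟩; exact ⟨i1, h1, rfl⟩
    · rintro ⟨i1, h1, rfl⟩; exact ⟨i1, h1, rfl⟩
  have hmapinj : Function.Injective (fun i1 : ZMod n => f (i1 + 1)) :=
    fun x y hxy => by simpa using hfinj hxy
  have hUcard : k ≤ U.ncard := by
    rw [hUA, Set.ncard_image_of_injective _ hmapinj]
    have := hdeg h
    rwa [hNA, Set.ncard_image_of_injective _ hfinj] at this
  have hhU : h ∉ U := fun hc => hh (hUrange hc)
  set T : Set V := insert h (U \ {f (i0 + 1)}) with hT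
  have hTcard : k ≤ T.ncard := by
    rw [hT, Set.ncard_insert_of_notMem (fun hc => hhU hc.1),
      Set.ncard_diff_singleton_of_mem huU]
    omega
  obtain ⟨T', hT'sub, hT'card⟩ := Set.exists_subset_card_eq hTcard
  have hcard : Nat.card T' = k := by rw [Nat.card_coe_set_eq]; exact hT'card
  let e : T' ≃ Fin k := Finite.equivFinOfCardEq hcard
  set z : Fin k → V := fun m => (e.symm m : V) with hz
  have hzinj : Function.Injective z :=
    fun x y hxy => e.symm.injective (Subtype.val_injective hxy)
  have hzT : ∀ m, z m ∈ T := fun m => hT'sub (e.symm m).2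
  have hzhU : ∀ m, z m ∈ insert h U := by
    intro m
    rcases Set.mem_insert_iff.mp (hzT m) with hc | hc
    · exact Set.mem_insert_iff.mpr (Or.inl hc)
    · exact Set.mem_insert_iff.mpr (Or.inr hc.1)
  have hzu : ∀ m, z m ≠ f (i0 + 1) := by
    intro m hc
    rcases Set.mem_insert_iff.mp (hzT m) with hc' | hc'
    · exact hh (⟨i0 + 1, (hc' ▸ hc).symm⟩)
    · exact hc'.2 hc
  have hz_ne_v : ∀ m, z m ≠ v := by
    intro m hc
    rcases Set.mem_insert_iff.mp (hzhU m) with hc' | hc'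
    · exact hvh (hc.symm.trans hc')
    · exact hvC (hUrange (hc ▸ hc'))
  have h_nadj_v : ∀ m, ¬ G.Adj v (z m) := by
    intro m hc
    rcases Set.mem_insert_iff.mp (hzhU m) with hc' | hc'
    · rw [hc'] at hc
      exact hhv hc.symm
    · have hc'' := hc'
      rw [hU] at hc''
      obtain ⟨j1, hj1, hzm⟩ := hc''
      rw [hzm] at hc
      have := hvone j1 hj1 hc
      rw [this] at hzm
      exact hzu m hzm
  have h_nadj_u : ∀ m, ¬ G.Adj (f (i0 + 1)) (z m) := by
    intro m hc
    exact hindep _ (Set.mem_insert_iff.mpr (Or.inr huU)) _ (hzhU m) hc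
  have h_pair : ∀ m m', ¬ G.Adj (z m) (z m') := by
    intro m m' hc
    exact hindep _ (hzhU m) _ (hzhU m') hc
  exact hfree ⟨v, f (i0 + 1), z, hzinj,
    hz_ne_v, hzu, fun hc => hvC ⟨i0 + 1, hc.symm⟩, hadj.symm, h_nadj_v, h_nadj_u, h_pair⟩
end

section
/- Let k ≥ 4 be an integer and let G be a finite simple (P₂ ∪ kP₁)-free graph that is not hamiltonian, in which every longest cycle is edge-dominating, and with minimum degree δ(G) ≥ k. Choose a longest cycle C of G and a vertex h ∉ V(C) so that d_G(h) is maximum over all such pairs (longest cycle, vertex outside it); set d = d_G(h) and U = {v⁺ : v ∈ N_G(h)}, where x⁺ denotes the successor of x along a fixed orientation of C. Then d_G(u) ≤ d for every u ∈ U, and consequently e_G(U, N_G(U)) ≤ d². -/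
open SimpleGraph Set

/-!
An edge inside `U ∪ {h}` would let one reroute `C` through `h` into a longer cycle, so
`U ∪ {h}` is independent, and `|U| = d ≥ k` because `N_G(h) ⊆ V(C)`. Take `u = v⁺ ∈ U`. If
`u⁺` had no neighbour in the `d` vertices of `(U ∪ {h}) ∖ {u}`, these together with the edge
`u u⁺` would induce `P₂ ∪ dP₁`. So `u⁺` is adjacent to `h` or to some `w⁺ ∈ U`, and in both
cases rerouting through `h` gives a longest cycle that misses `u`; maximality of `d_G(h)` then
yields `d_G(u) ≤ d`. Summing degrees over `U` bounds `e_G(U, N_G(U))` by `d²`.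
-/

section

variable {V : Type*} {G : SimpleGraph V}

lemma ZMod.intCast_injOn_Ico {n : ℕ} (lo : ℤ) :
    InjOn (fun x : ℤ => (x : ZMod n)) (Ico lo (lo + n)) := by
  intro x hx y hy hxy
  have hdvd := (ZMod.intCast_eq_intCast_iff_dvd_sub x y n).1 hxy
  have := Int.eq_zero_of_abs_lt_dvd hdvd (abs_sub_lt_iff.2 ⟨by grind, by grind⟩)
  omega

lemma ZMod.exists_eq_sub_natCast {n : ℕ} [NeZero n] {i j : ZMod n} (hij : i ≠ j) :
    ∃ a : ℕ, 0 < a ∧ a < n ∧ j = i - a :=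
  ⟨(i - j).val, ZMod.val_pos.2 (sub_ne_zero.2 hij), ZMod.val_lt _, by simp⟩

lemma IsCycleMap.of_seq {m : ℕ} (σ : ℕ → V) (hm : 3 ≤ m) (hinj : InjOn σ (Iio m))
    (hadj : ∀ r, r + 1 < m → G.Adj (σ r) (σ (r + 1))) (hlast : G.Adj (σ (m - 1)) (σ 0)) :
    IsCycleMap G (fun t : ZMod m => σ t.val) := by
  have : NeZero m := ⟨by omega⟩
  refine ⟨hm, fun t₁ t₂ h => ZMod.val_injective m (hinj (ZMod.val_lt t₁) (ZMod.val_lt t₂) h),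
    fun t => ?_⟩
  show G.Adj (σ t.val) (σ (t + 1).val)
  have hv : (t + 1).val = (t.val + 1) % m := by
    rw [ZMod.val_add, ZMod.val_one_eq_one_mod, Nat.mod_eq_of_lt (by omega : 1 < m)]
  by_cases hc : t.val + 1 = m
  · rw [hv, hc, Nat.mod_self, show t.val = m - 1 by omega]
    exact hlast
  · rw [hv, Nat.mod_eq_of_lt (by have := ZMod.val_lt t; omega)]
    exact hadj _ (by have := ZMod.val_lt t; omega)

lemma IsCycleMap.adj_add_intCast {n : ℕ} {f : ZMod n → V} (hf : IsCycleMap G f) (i : ZMod n)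
    {x y : ℤ} (hxy : x + 1 = y ∨ y + 1 = x) : G.Adj (f (i + x)) (f (i + y)) := by
  rcases hxy with rfl | rfl
  · simpa [add_assoc] using hf.2.2 (i + x)
  · simpa [add_assoc] using (hf.2.2 (i + y)).symm

def detour {n : ℕ} (h : V) (f : ZMod n → V) (i : ZMod n) (q : ℕ → ℤ) (m : ℕ) : ZMod m → V :=
  fun t => if t.val = 0 then h else f (i + q t.val)

section Detour

variable {n m : ℕ} {f : ZMod n → V} {h : V} {i : ZMod n} {q : ℕ → ℤ}

lemma isCycleMap_detour (hf : Function.Injective f) (hh : h ∉ range f) (hm : 3 ≤ m) (lo : ℤ)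
    (hwin : MapsTo q (Ico 1 m) (Ico lo (lo + n))) (hq : InjOn q (Ico 1 m))
    (hfirst : G.Adj h (f (i + q 1))) (hlast : G.Adj (f (i + q (m - 1))) h)
    (hstep : ∀ r, 1 ≤ r → r + 1 < m → G.Adj (f (i + q r)) (f (i + q (r + 1)))) :
    IsCycleMap G (detour h f i q m) := by
  refine IsCycleMap.of_seq (fun r => if r = 0 then h else f (i + q r)) hm ?_ ?_ ?_
  · intro r hr r' hr' hrr'
    simp only at hrr'
    split_ifs at hrr'
    · omega
    · exact absurd ⟨_, hrr'.symm⟩ hh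
    · exact absurd ⟨_, hrr'⟩ hh
    · have hr1 : r ∈ Ico 1 m := ⟨by omega, hr⟩
      have hr1' : r' ∈ Ico 1 m := ⟨by omega, hr'⟩
      exact hq hr1 hr1'
        (ZMod.intCast_injOn_Ico lo (hwin hr1) (hwin hr1') (add_left_cancel (hf hrr')))
  · intro r hr
    by_cases h0 : r = 0
    · subst h0; simpa using hfirst
    · simpa [h0] using hstep r (by omega) hr
  · simpa [show m - 1 ≠ 0 by omega] using hlast

lemma notMem_range_detour [NeZero m] (hf : Function.Injective f) (hh : h ∉ range f) (lo : ℤ)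
    (hwin : MapsTo q (Ico 1 m) (Ico lo (lo + n))) {x : ℤ} (hx : x ∈ Ico lo (lo + n))
    (hqx : ∀ r ∈ Ico 1 m, q r ≠ x) : f (i + x) ∉ range (detour h f i q m) := by
  rintro ⟨t, ht⟩
  have htm := ZMod.val_lt t
  unfold detour at ht
  split_ifs at ht with h0
  · exact hh ⟨_, ht.symm⟩
  · have hr : t.val ∈ Ico 1 m := ⟨by omega, htm⟩
    exact hqx _ hr (ZMod.intCast_injOn_Ico lo (hwin hr) hx (add_left_cancel (hf ht)))

end Detour

namespace IsCycleMap

variable {n : ℕ} {f : ZMod n → V} {h : V} {i : ZMod n}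

lemma exists_bypass (hf : IsCycleMap G f) (hh : h ∉ range f) (e : ℕ) (he : e + 2 ≤ n)
    (h₁ : G.Adj h (f i)) (h₂ : G.Adj h (f (i + e + 1))) :
    ∃ g : ZMod (n + 1 - e) → V, IsCycleMap G g ∧ ∀ s < e, f (i + s + 1) ∉ range g := by
  have : NeZero (n + 1 - e) := ⟨by omega⟩
  set q : ℕ → ℤ := fun r => e + r with hq
  have hwin : MapsTo q (Ico 1 (n + 1 - e)) (Ico 1 (1 + n)) := by
    intro r ⟨hr1, hr2⟩; simp only [hq, mem_Ico]; omega
  refine ⟨detour h f i q (n + 1 - e), isCycleMap_detour hf.2.1 hh (by omega) 1 hwin ?_ ?_ ?_ ?_,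
    fun s hs => ?_⟩
  · intro r _ r' _ hrr'; simp only [hq] at hrr'; omega
  · simpa [hq, add_assoc] using h₂
  · have : q (n + 1 - e - 1) = n := by simp only [hq]; omega
    simpa [this] using h₁.symm
  · intro r _ _
    exact hf.adj_add_intCast i (Or.inl (by simp only [hq]; push_cast; ring))
  · have := notMem_range_detour hf.2.1 hh 1 hwin (i := i) (x := s + 1)
      (by simp only [mem_Ico]; omega) (fun r ⟨hr, _⟩ => by simp only [hq]; omega)
    simpa [add_assoc] using this

lemma exists_crossed_bypass (hf : IsCycleMap G f) (hh : h ∉ range f) {a : ℕ} (e : ℕ)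
    (ha : 0 < a) (hae : a + e < n) (h₁ : G.Adj h (f i)) (h₂ : G.Adj h (f (i - a)))
    (h₃ : G.Adj (f (i - a + 1)) (f (i + e + 1))) :
    ∃ g : ZMod (n + 1 - e) → V, IsCycleMap G g ∧ ∀ s < e, f (i + s + 1) ∉ range g := by
  have : NeZero (n + 1 - e) := ⟨by omega⟩
  -- walk back from `f i` to `f (i - a + 1)`, jump to `f (i + e + 1)`, then forward to `f (i - a)`
  set q : ℕ → ℤ := fun r => if r ≤ a then 1 - r else e + r - a with hq
  have hwin : MapsTo q (Ico 1 (n + 1 - e)) (Ico (1 - a) (1 - a + n)) := by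
    intro r ⟨hr1, hr2⟩; simp only [hq, mem_Ico]; split_ifs <;> omega
  refine ⟨detour h f i q (n + 1 - e),
    isCycleMap_detour hf.2.1 hh (by omega) (1 - a) hwin ?_ ?_ ?_ ?_, fun s hs => ?_⟩
  · intro r ⟨hr, _⟩ r' ⟨hr', _⟩ hrr'; simp only [hq] at hrr'; split_ifs at hrr' <;> omega
  · simpa [hq, show 1 ≤ a by omega] using h₁
  · have : q (n + 1 - e - 1) = n - a := by simp only [hq]; split_ifs <;> omega
    simpa [this, sub_eq_add_neg] using h₂.symm
  · intro r hr1 hr2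
    rcases lt_trichotomy r a with hra | rfl | hra
    · exact hf.adj_add_intCast i (Or.inr (by simp only [hq]; split_ifs <;> omega))
    · have e₁ : q r = 1 - r := by simp [hq]
      have e₂ : q (r + 1) = e + 1 := by simp only [hq]; split_ifs <;> omega
      simpa [e₁, e₂, add_assoc, sub_eq_add_neg, add_comm] using h₃
    · exact hf.adj_add_intCast i (Or.inl (by simp only [hq]; split_ifs <;> omega))
  · have := notMem_range_detour hf.2.1 hh (1 - a) hwin (i := i) (x := s + 1)
      (by simp only [mem_Ico]; omega) (fun r ⟨hr, _⟩ => by simp only [hq]; split_ifs <;> omega)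
    simpa [add_assoc] using this

end IsCycleMap

namespace IsLongestCycleMap

variable {n : ℕ} {f : ZMod n → V} {h : V} {i j : ZMod n}

lemma of_isCycleMap {m : ℕ} {g : ZMod m → V} (hC : IsLongestCycleMap G f) (hg : IsCycleMap G g)
    (hnm : n ≤ m) : IsLongestCycleMap G g :=
  ⟨hg, fun _ _ hg' => (hC.2 _ _ hg').trans hnm⟩

lemma not_adj_add_one (hC : IsLongestCycleMap G f) (hh : h ∉ range f) (h₁ : G.Adj h (f i)) :
    ¬ G.Adj h (f (i + 1)) := fun h₂ => by
  obtain ⟨g, hg, -⟩ := hC.1.exists_bypass hh 0 (by have := hC.1.1; omega) h₁ (by simpa using h₂)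
  have := hC.2 _ g hg
  omega

lemma not_adj_add_one_add_one (hC : IsLongestCycleMap G f) (hh : h ∉ range f)
    (h₁ : G.Adj h (f i)) (h₂ : G.Adj h (f j)) (hij : i ≠ j) :
    ¬ G.Adj (f (i + 1)) (f (j + 1)) := fun h₃ => by
  have : NeZero n := ⟨by have := hC.1.1; omega⟩
  obtain ⟨a, ha, han, rfl⟩ := ZMod.exists_eq_sub_natCast hij
  obtain ⟨g, hg, -⟩ := hC.1.exists_crossed_bypass hh 0 ha (by omega) h₁ h₂ (by simpa using h₃.symm)
  have := hC.2 _ g hg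
  omega

lemma exists_notMem_of_adj_add_two (hC : IsLongestCycleMap G f) (hh : h ∉ range f)
    (h₁ : G.Adj h (f i)) (h₂ : G.Adj h (f (i + 2))) :
    ∃ (m : ℕ) (g : ZMod m → V), IsLongestCycleMap G g ∧ f (i + 1) ∉ range g := by
  obtain ⟨g, hg, hgf⟩ := hC.1.exists_bypass hh 1 (by have := hC.1.1; omega) h₁
    (by simpa [add_assoc, one_add_one_eq_two] using h₂)
  exact ⟨_, g, hC.of_isCycleMap hg (by omega), by simpa using hgf 0 one_pos⟩

lemma exists_notMem_of_adj_add_two_add_one (hC : IsLongestCycleMap G f) (hh : h ∉ range f)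
    (h₁ : G.Adj h (f i)) (h₂ : G.Adj h (f j)) (hij : i ≠ j) (hji : j ≠ i + 1)
    (h₃ : G.Adj (f (i + 2)) (f (j + 1))) :
    ∃ (m : ℕ) (g : ZMod m → V), IsLongestCycleMap G g ∧ f (i + 1) ∉ range g := by
  have : NeZero n := ⟨by have := hC.1.1; omega⟩
  obtain ⟨a, ha, han, rfl⟩ := ZMod.exists_eq_sub_natCast hij
  have han' : a + 1 < n := by
    refine lt_of_le_of_ne han (fun hna => hji ?_)
    have : (a : ZMod n) = -1 := by
      rw [eq_neg_iff_add_eq_zero, ← Nat.cast_add_one, hna, ZMod.natCast_self]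
    rw [this, sub_neg_eq_add]
  obtain ⟨g, hg, hgf⟩ := hC.1.exists_crossed_bypass hh 1 ha han' h₁ h₂
    (by simpa [add_assoc, one_add_one_eq_two] using h₃.symm)
  exact ⟨_, g, hC.of_isCycleMap hg (by omega), by simpa using hgf 0 one_pos⟩

end IsLongestCycleMap

lemma P2kP1Free.exists_adj_of_isIndep {k : ℕ} (hfree : P2kP1Free G k) {x y : V} {S : Set V}
    (hxy : G.Adj x y) (hS : IsIndep G S) (hk : k ≤ S.ncard) (hx : x ∉ S) (hy : y ∉ S) :
    ∃ z ∈ S, G.Adj x z ∨ G.Adj y z := by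
  by_contra! hxyS
  obtain ⟨z, hz⟩ : ∃ z : Fin k ↪ V, range z ⊆ S := by
    rcases S.finite_or_infinite with hSf | hSi
    · obtain ⟨z, hz⟩ := Function.Embedding.exists_of_card_le_finset (α := Fin k)
        (s := hSf.toFinset) (by simpa [← ncard_eq_toFinset_card _ hSf] using hk)
      exact ⟨z, by simpa using hz⟩
    · obtain rfl : k = 0 := by rw [hSi.ncard] at hk; omega
      exact ⟨⟨Fin.elim0, fun a => a.elim0⟩, fun _ ⟨a, _⟩ => a.elim0⟩
  have hzS : ∀ t, z t ∈ S := fun t => hz ⟨t, rfl⟩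
  exact hfree ⟨x, y, z, z.injective, fun t hzt => hx (hzt ▸ hzS t),
    fun t hzt => hy (hzt ▸ hzS t), hxy.ne, hxy, fun t => (hxyS _ (hzS t)).1,
    fun t => (hxyS _ (hzS t)).2, fun t t' => hS _ (hzS t) _ (hzS t')⟩

lemma IsEdgeDomCycle.neighborSet_subset_range {n : ℕ} {f : ZMod n → V} (hf : IsEdgeDomCycle G f)
    {h : V} (hh : h ∉ range f) : G.neighborSet h ⊆ range f := by
  intro x hx
  by_contra hxf
  set c := (G.induce (range f)ᶜ).connectedComponentMk ⟨h, hh⟩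
  have : Subsingleton c.supp := (Nat.card_eq_one_iff_unique.1 (hf.2 c)).1
  have hxc : (⟨x, hxf⟩ : ↥(range f)ᶜ) ∈ c.supp :=
    ConnectedComponent.sound (Adj.reachable (G := G.induce (range f)ᶜ)
      (u := ⟨h, hh⟩) (v := ⟨x, hxf⟩) hx).symm
  have := congrArg (fun p : c.supp => (p : V)) (Subsingleton.elim ⟨_, rfl⟩ ⟨_, hxc⟩)
  exact hx.ne this

lemma eBetween_le_ncard_mul [Finite V] {S T : Set V} {D : ℕ}
    (hD : ∀ u ∈ S, (G.neighborSet u).ncard ≤ D) : eBetween G S T ≤ S.ncard * D := by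
  have hS := S.toFinite
  calc eBetween G S T ≤ (⋃ u ∈ hS.toFinset, {u} ×ˢ G.neighborSet u).ncard := by
        refine ncard_le_ncard (fun p ⟨hp, _, hadj⟩ => ?_)
        simp only [mem_iUnion]
        exact ⟨p.1, by simpa using hp, rfl, hadj⟩
    _ ≤ ∑ u ∈ hS.toFinset, ({u} ×ˢ G.neighborSet u).ncard := Finset.set_ncard_biUnion_le _ _
    _ ≤ ∑ _u ∈ hS.toFinset, D := Finset.sum_le_sum fun u hu => by
        simpa [ncard_prod] using hD u (by simpa using hu)
    _ = S.ncard * D := by simp [ncard_eq_toFinset_card _ hS]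

def succOfNbrs {n : ℕ} (G : SimpleGraph V) (f : ZMod n → V) (h : V) : Set V :=
  {w | ∃ i, G.Adj h (f i) ∧ w = f (i + 1)}

section SuccOfNbrs

variable {n : ℕ} {f : ZMod n → V} {h : V}

lemma ncard_succOfNbrs (hf : Function.Injective f) (hN : G.neighborSet h ⊆ range f) :
    (succOfNbrs G f h).ncard = (G.neighborSet h).ncard := by
  have hU : succOfNbrs G f h = (fun t => f (t + 1)) '' {t | G.Adj h (f t)} := by
    ext; simp [succOfNbrs, eq_comm]
  have hNh : G.neighborSet h = f '' {t | G.Adj h (f t)} := by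
    ext x
    refine ⟨fun hx => ?_, fun ⟨t, ht, hx⟩ => hx ▸ ht⟩
    obtain ⟨t, rfl⟩ := hN hx
    exact ⟨t, hx, rfl⟩
  rw [hU, hNh, ncard_image_of_injective _ hf]
  exact ncard_image_of_injective _ fun _ _ hst => add_left_injective 1 (hf hst)

lemma IsLongestCycleMap.isIndep_insert_succOfNbrs (hC : IsLongestCycleMap G f)
    (hh : h ∉ range f) : IsIndep G (insert h (succOfNbrs G f h)) := by
  rintro _ (rfl | ⟨i, hi, rfl⟩) _ (rfl | ⟨j, hj, rfl⟩) hadj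
  · exact hadj.ne rfl
  · exact hC.not_adj_add_one hh hj hadj
  · exact hC.not_adj_add_one hh hi hadj.symm
  · rcases eq_or_ne i j with rfl | hij
    · exact hadj.ne rfl
    · exact hC.not_adj_add_one_add_one hh hi hj hij hadj

lemma IsLongestCycleMap.exists_adj_add_two [Finite V] (hC : IsLongestCycleMap G f)
    (hh : h ∉ range f) {k : ℕ} (hfree : P2kP1Free G k) (hk : k ≤ (succOfNbrs G f h).ncard)
    {i : ZMod n} (h₁ : G.Adj h (f i)) :
    ∃ z ∈ insert h (succOfNbrs G f h) \ {f (i + 1)}, G.Adj (f (i + 2)) z := by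
  have hind := hC.isIndep_insert_succOfNbrs hh
  have hu : f (i + 1) ∈ insert h (succOfNbrs G f h) := Or.inr ⟨i, h₁, rfl⟩
  have hy : f (i + 2) ∉ insert h (succOfNbrs G f h) := by
    rintro (hy | ⟨j, hj, hy⟩)
    · exact hh ⟨_, hy⟩
    · obtain rfl : j = i + 1 := by linear_combination (hC.1.2.1 hy).symm
      exact hC.not_adj_add_one hh h₁ hj
  have hhU : h ∉ succOfNbrs G f h := fun ⟨_, _, hj⟩ => hh ⟨_, hj.symm⟩
  have hS : k ≤ (insert h (succOfNbrs G f h) \ {f (i + 1)}).ncard := by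
    rwa [ncard_sdiff_singleton_of_mem hu, ncard_insert_of_notMem hhU, Nat.add_sub_cancel]
  obtain ⟨z, hz, hyz | huz⟩ := hfree.exists_adj_of_isIndep
    (by simpa [add_assoc, one_add_one_eq_two] using (hC.1.2.2 (i + 1)).symm)
    (fun x hx y hy => hind x hx.1 y hy.1) hS (fun hy' => hy hy'.1) (fun hu' => hu'.2 rfl)
  · exact ⟨z, hz, hyz⟩
  · exact absurd huz (hind _ hu _ hz.1)

lemma IsLongestCycleMap.ncard_neighborSet_add_one_le [Finite V] (hC : IsLongestCycleMap G f)
    (hh : h ∉ range f) {k : ℕ} (hfree : P2kP1Free G k) (hk : k ≤ (succOfNbrs G f h).ncard)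
    (hmax : ∀ (m : ℕ) (g : ZMod m → V) (h' : V), IsLongestCycleMap G g →
      h' ∉ range g → (G.neighborSet h').ncard ≤ (G.neighborSet h).ncard)
    {i : ZMod n} (h₁ : G.Adj h (f i)) :
    (G.neighborSet (f (i + 1))).ncard ≤ (G.neighborSet h).ncard := by
  suffices ∃ (m : ℕ) (g : ZMod m → V), IsLongestCycleMap G g ∧ f (i + 1) ∉ range g by
    obtain ⟨m, g, hg, hgi⟩ := this
    exact hmax m g _ hg hgi
  obtain ⟨z, ⟨rfl | ⟨j, hj, rfl⟩, hzi⟩, hadj⟩ := hC.exists_adj_add_two hh hfree hk h₁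
  · exact hC.exists_notMem_of_adj_add_two hh h₁ hadj.symm
  · refine hC.exists_notMem_of_adj_add_two_add_one hh h₁ hj ?_ ?_ hadj
    · rintro rfl; exact hzi rfl
    · rintro rfl; exact hC.not_adj_add_one hh h₁ hj

end SuccOfNbrs

end

theorem stmt_8_general {V : Type*} [Fintype V] (k : ℕ) (G : SimpleGraph V)
    (hfree : P2kP1Free G k)
    (hdom : ∀ (m : ℕ) (g : ZMod m → V), IsLongestCycleMap G g → IsEdgeDomCycle G g)
    (hdeg : ∀ v : V, k ≤ (G.neighborSet v).ncard)
    (n : ℕ) (f : ZMod n → V) (hC : IsLongestCycleMap G f)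
    (h : V) (hh : h ∉ Set.range f)
    (hmax : ∀ (m : ℕ) (g : ZMod m → V) (h' : V), IsLongestCycleMap G g →
      h' ∉ Set.range g → (G.neighborSet h').ncard ≤ (G.neighborSet h).ncard)
    (d : ℕ) (hd : d = (G.neighborSet h).ncard)
    (U : Set V) (hU : U = {w | ∃ i : ZMod n, G.Adj h (f i) ∧ w = f (i + 1)}) :
    (∀ u ∈ U, (G.neighborSet u).ncard ≤ d) ∧
    eBetween G U (setNbhd G U) ≤ d ^ 2 := by
  subst hd hU
  have hcard : (succOfNbrs G f h).ncard = (G.neighborSet h).ncard :=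
    ncard_succOfNbrs hC.1.2.1 ((hdom n f hC).neighborSet_subset_range hh)
  have hdegU : ∀ u ∈ succOfNbrs G f h, (G.neighborSet u).ncard ≤ (G.neighborSet h).ncard := by
    rintro _ ⟨i, hi, rfl⟩
    exact hC.ncard_neighborSet_add_one_le hh hfree (hcard ▸ hdeg h) hmax hi
  refine ⟨hdegU, ?_⟩
  calc _ ≤ _ := eBetween_le_ncard_mul hdegU
    _ = _ := by rw [hcard, sq]

/-- Claim 3.3: `G` is `(P₂ ∪ kP₁)`-free, not hamiltonian, every longest
cycle is edge-dominating, and `δ(G) ≥ k`.  For a longest cycle `C` and `h ∉ V(C)` chosen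
so that `d_G(h)` is maximum over all such pairs, with `d = d_G(h)` and `U` the set of
successors of the neighbours of `h`, we have `d_G(u) ≤ d` for every `u ∈ U` and
`e_G(U, N_G(U)) ≤ d²`. -/
theorem stmt_8 {V : Type*} [Fintype V] (k : ℕ) (hk : 4 ≤ k) (G : SimpleGraph V)
    (hfree : P2kP1Free G k) (hnotham : ¬ IsHamiltonianGraph G)
    (hdom : ∀ (m : ℕ) (g : ZMod m → V), IsLongestCycleMap G g → IsEdgeDomCycle G g)
    (hdeg : ∀ v : V, k ≤ (G.neighborSet v).ncard)
    (n : ℕ) (f : ZMod n → V) (hC : IsLongestCycleMap G f)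
    (h : V) (hh : h ∉ Set.range f)
    (hmax : ∀ (m : ℕ) (g : ZMod m → V) (h' : V), IsLongestCycleMap G g →
      h' ∉ Set.range g → (G.neighborSet h').ncard ≤ (G.neighborSet h).ncard)
    (d : ℕ) (hd : d = (G.neighborSet h).ncard)
    (U : Set V) (hU : U = {w | ∃ i : ZMod n, G.Adj h (f i) ∧ w = f (i + 1)}) :
    (∀ u ∈ U, (G.neighborSet u).ncard ≤ d) ∧
    eBetween G U (setNbhd G U) ≤ d ^ 2 :=
  stmt_8_general k G hfree hdom hdeg n f hC h hh hmax d hd U hU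
end

section
/- Let k ≥ 4 be an integer and let G be a finite simple (P₂ ∪ kP₁)-free graph. Let C be a longest cycle of G with a fixed orientation and let h ∉ V(C) with N_G(h) ⊆ V(C) and d = |N_G(h)| ≥ k. Let v₁, …, v_d be the neighbors of h in the order they appear along C, let u_i = v_i⁺ and U = {u₁, …, u_d}. Suppose x ∈ V(C) satisfies x ∈ N_G(U) and x⁺ ∈ N_G(U), where (relabeling indices cyclically) x lies on the arc of C from u_d⁺ to v₁⁻ (so x ∉ N_G(h) ∪ {h}). Define l_x = min{ i ∈ [1,d] : u_i x ∈ E(G) } and r_x = max{ i ∈ [1,d] : u_i x⁺ ∈ E(G) }. Then: (i) N_G(x) ∩ U ⊆ {u_i : l_x ≤ i ≤ d} and |N_G(x) ∩ U| ≥ d − k + 2; (ii) N_G(x⁺) ∩ U ⊆ {u_i : 1 ≤ i ≤ r_x} and |N_G(x⁺) ∩ U| ≥ d − k + 1; (iii) r_x ≤ l_x, u_{l_x}⁺ ∉ N_G(h), N_G(u_{l_x}⁺) ∩ U ⊆ {u_i : r_x ≤ i ≤ l_x}, and |N_G(u_{l_x}⁺) ∩ U| ≥ d − k + 2. -/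
open SimpleGraph Set

/-!
Two facts drive every clause. First, maximality of `C`: in each excluded configuration the
vertices of `C` can be rearranged, along arcs of `C` joined by the chords at hand, into a path
between two neighbours of `h`; closing it through `h` gives a cycle longer than `C`. This rules
out `h ~ uᵢ`, `uᵢ ~ uⱼ`, `r_x > l_x`, `h ~ u_{l_x}⁺`, and chords from `u_{l_x}⁺` to `uᵢ` with
`i ∉ [r_x, l_x]`. Second, `(P₂ ∪ kP₁)`-freeness: if `y ∉ I` is adjacent to a vertex `u` of an
independent set `I`, the non-neighbours of `y` in `I` together with the edge `yu` induce
`P₂ ∪ mP₁`, so `m < k`. Applied to `I = U` and to `I = U ∪ {h}` (independent by the first fact),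
this gives the lower bounds on `|N(y) ∩ U|`.
-/

section

variable {V : Type*} {G : SimpleGraph V}

theorem exists_isCycleMap_of_isChain {L : List V} (hL : 3 ≤ L.length) (hnd : L.Nodup)
    (hchain : L.IsChain G.Adj) (hclose : ∀ a ∈ L.getLast?, ∀ b ∈ L.head?, G.Adj a b) :
    ∃ g : ZMod L.length → V, IsCycleMap G g := by
  have : NeZero L.length := ⟨by omega⟩
  have : Fact (1 < L.length) := ⟨by omega⟩
  refine ⟨fun i => L[i.val]'(ZMod.val_lt i), hL, fun i j hij => ZMod.val_injective _ ?_,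
    fun i => ?_⟩
  · exact hnd.getElem_inj_iff.1 hij
  · have hsucc : (i + 1).val = (i.val + 1) % L.length := by rw [ZMod.val_add, ZMod.val_one]
    have hi := ZMod.val_lt i
    simp only [hsucc]
    by_cases hlast : i.val + 1 < L.length
    · simp only [Nat.mod_eq_of_lt hlast]
      exact List.isChain_iff_getElem.1 hchain _ hlast
    · simp only [show i.val + 1 = L.length by omega, Nat.mod_self]
      refine hclose _ ?_ _ (by simp [List.head?_eq_getElem?])
      simp [List.getLast?_eq_getElem?, show i.val = L.length - 1 by omega]

namespace List.Ico

theorem head?_of_lt {a b : ℕ} (h : a < b) : (List.Ico a b).head? = some a := by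
  rw [List.Ico.eq_cons h]; rfl

theorem getLast?_succ {a b : ℕ} (h : a ≤ b) : (List.Ico a (b + 1)).getLast? = some b := by
  rw [List.Ico.succ_top h, List.getLast?_concat]

end List.Ico

namespace IsCycleMap

variable {n : ℕ} {f : ZMod n → V}

theorem injOn_natCast (hC : IsCycleMap G f) (w : ℕ) :
    Set.InjOn (fun t : ℕ => f t) (Set.Ico w (w + n)) := by
  intro s hs t ht hst
  refine ((ZMod.natCast_eq_natCast_iff s t n).1 (hC.2.1 hst)).eq_of_abs_lt ?_
  simp only [Set.mem_Ico] at hs ht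
  rw [abs_sub_lt_iff]
  omega

theorem natCast_inj (hC : IsCycleMap G f) {s t : ℕ} (hs : s < n) (ht : t < n) :
    f s = f t ↔ s = t :=
  ⟨hC.injOn_natCast 0 (by simpa using hs) (by simpa using ht), by rintro rfl; rfl⟩

theorem ncard_range_succ (hC : IsCycleMap G f) {ι : Type*} {p : ι → ℕ}
    (hp : Function.Injective p) (hpn : ∀ i, p i + 1 < n) :
    (Set.range fun i => f (p i + 1)).ncard = Nat.card ι :=
  Set.ncard_range_of_injective fun i j hij =>
    hp <| Nat.succ_injective <| (hC.natCast_inj (hpn i) (hpn j)).1 (by simpa using hij)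

theorem isChain_Ico (hC : IsCycleMap G f) (a b : ℕ) :
    (List.Ico a b).IsChain fun s t : ℕ => G.Adj (f s) (f t) :=
  (List.Ico.isChain_succ a b).imp fun s t hst => by
    rw [hst, Nat.succ_eq_add_one, Nat.cast_add, Nat.cast_one]; exact hC.2.2 s

theorem isChain_Ico_reverse (hC : IsCycleMap G f) (a b : ℕ) :
    (List.Ico a b).reverse.IsChain fun s t : ℕ => G.Adj (f s) (f t) :=
  List.isChain_reverse.2 <| (hC.isChain_Ico a b).imp fun _ _ hst => hst.symm

end IsCycleMap

namespace IsLongestCycleMap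

variable {n : ℕ} {f : ZMod n → V} {h : V}

/-- Indices are read modulo `n`; the window `[w, w + n)` lets an arc of the new cycle run past
index `n`. -/
theorem false_of_extension (hC : IsLongestCycleMap G f) (hh : h ∉ Set.range f) {I : List ℕ}
    (w : ℕ) (hlen : I.length = n) (hnd : I.Nodup) (hwin : ∀ t ∈ I, w ≤ t ∧ t < w + n)
    (hchain : I.IsChain fun s t : ℕ => G.Adj (f s) (f t))
    (hhead : ∀ t ∈ I.head?, G.Adj h (f t)) (hlast : ∀ t ∈ I.getLast?, G.Adj h (f t)) :
    False := by
  have hn := hC.1.1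
  have hI : I ≠ [] := by rintro rfl; simp at hlen; omega
  set L := h :: I.map fun t : ℕ => f t
  have hnd : L.Nodup := by
    refine List.nodup_cons.2 ⟨fun hmem => ?_, hnd.map_on fun s hs t ht => ?_⟩
    · obtain ⟨t, -, ht⟩ := List.mem_map.1 hmem
      exact hh ⟨_, ht⟩
    · exact hC.1.injOn_natCast w (hwin s hs) (hwin t ht)
  have hchain : L.IsChain G.Adj := by
    refine List.isChain_cons.2 ⟨?_, List.isChain_map _ |>.2 hchain⟩
    simpa using hhead
  have hclose : ∀ a ∈ L.getLast?, ∀ b ∈ L.head?, G.Adj a b := by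
    obtain ⟨t, ht⟩ := Option.isSome_iff_exists.1 (List.getLast?_isSome.2 hI)
    simpa [L, List.getLast?_cons, ht] using (hlast t ht).symm
  obtain ⟨g, hg⟩ := exists_isCycleMap_of_isChain (by simp [L]; omega) hnd hchain hclose
  have := hC.2 _ g hg
  simp [L] at this
  omega

theorem not_adj_succ (hC : IsLongestCycleMap G f) (hh : h ∉ Set.range f) {a : ℕ}
    (ha : G.Adj h (f a)) : ¬ G.Adj h (f (a + 1)) := fun ha' => by
  have := hC.1.1
  refine hC.false_of_extension hh (I := (List.Ico (a + 1) (a + n + 1)).reverse) (a + 1)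
    ?_ ?_ ?_ ?_ ?_ ?_
  all_goals simp (disch := omega) [List.Ico.nodup, List.Ico.mem, hC.1.isChain_Ico_reverse,
    List.Ico.getLast?_succ, List.Ico.head?_of_lt, Nat.cast_add, *]
  all_goals intros; omega

theorem not_adj_succ_succ (hC : IsLongestCycleMap G f) (hh : h ∉ Set.range f) {a c : ℕ}
    (hac : a < c) (hca : c < a + n) (ha : G.Adj h (f a)) (hc : G.Adj h (f c)) :
    ¬ G.Adj (f (c + 1)) (f (a + 1)) := fun hac' => by
  have := hC.1.1
  refine hC.false_of_extension hh
    (I := (List.Ico (c + 1) (a + n + 1)).reverse ++ List.Ico (a + 1) (c + 1)) (a + 1)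
    ?_ ?_ ?_ ?_ ?_ ?_
  all_goals simp (disch := omega) [List.nodup_append, List.Ico.nodup, List.Ico.mem,
    List.isChain_append, hC.1.isChain_Ico_reverse, hC.1.isChain_Ico, List.Ico.getLast?_succ,
    List.Ico.head?_of_lt, Nat.cast_add, *]
  all_goals intros; omega

-- Below, `f a` and `f b` play `v_{l_x}` and `v_{r_x}`, and `f q` plays `x`.
theorem le_of_crossing (hC : IsLongestCycleMap G f) (hh : h ∉ Set.range f) {a b q : ℕ}
    (hbq : b < q) (hqa : q < a + n) (ha : G.Adj h (f a)) (hb : G.Adj h (f b))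
    (hbx : G.Adj (f (b + 1)) (f (q + 1))) (hax : G.Adj (f (a + 1)) (f q)) : b ≤ a := by
  by_contra! hab
  have := hC.1.1
  have := hbx.symm
  have := hax.symm
  refine hC.false_of_extension hh (I := (List.Ico (q + 1) (a + n + 1)).reverse ++
    (List.Ico (b + 1) (q + 1) ++ List.Ico (a + 1) (b + 1))) (a + 1) ?_ ?_ ?_ ?_ ?_ ?_
  all_goals simp (disch := omega) [List.nodup_append, List.Ico.nodup, List.Ico.mem,
    List.isChain_append, hC.1.isChain_Ico_reverse, hC.1.isChain_Ico, List.Ico.getLast?_succ,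
    List.Ico.head?_of_lt, Nat.cast_add, *]
  all_goals and_intros <;> intros <;> omega

theorem not_adj_add_two_of_crossing (hC : IsLongestCycleMap G f) (hh : h ∉ Set.range f)
    {a b q : ℕ} (hba : b ≤ a) (haq : a + 1 < q) (hqb : q < b + n) (hb : G.Adj h (f b))
    (hbx : G.Adj (f (b + 1)) (f (q + 1))) (hax : G.Adj (f (a + 1)) (f q)) :
    ¬ G.Adj h (f (a + 2)) := fun hw => by
  have := hC.1.1
  have := hbx.symm
  refine hC.false_of_extension hh (I := (List.Ico (q + 1) (b + n + 1)).reverse ++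
    (List.Ico (b + 1) (a + 2) ++ (List.Ico (a + 2) (q + 1)).reverse)) (b + 1) ?_ ?_ ?_ ?_ ?_ ?_
  all_goals simp (disch := omega) [List.nodup_append, List.Ico.nodup, List.Ico.mem,
    List.isChain_append, hC.1.isChain_Ico_reverse, hC.1.isChain_Ico, List.Ico.getLast?_succ,
    List.Ico.head?_of_lt, Nat.cast_add, *]
  all_goals and_intros <;> intros <;> omega

theorem le_of_crossing_of_adj_add_two (hC : IsLongestCycleMap G f) (hh : h ∉ Set.range f)
    {a b c q : ℕ} (hba : b ≤ a) (hcq : c < q) (hqb : q < b + n) (hb : G.Adj h (f b))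
    (hc : G.Adj h (f c)) (hbx : G.Adj (f (b + 1)) (f (q + 1)))
    (hax : G.Adj (f (a + 1)) (f q)) (hwc : G.Adj (f (a + 2)) (f (c + 1))) : c ≤ a := by
  by_contra! hac
  obtain rfl | hac' := (show c = a + 1 ∨ a + 1 < c by omega)
  · push_cast [add_assoc, one_add_one_eq_two] at hwc
    exact G.irrefl hwc
  have := hC.1.1
  have := hbx.symm
  have := hwc.symm
  refine hC.false_of_extension hh (I := (List.Ico (q + 1) (b + n + 1)).reverse ++
    (List.Ico (b + 1) (a + 2) ++ ((List.Ico (c + 1) (q + 1)).reverse ++ List.Ico (a + 2) (c + 1))))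
    (b + 1) ?_ ?_ ?_ ?_ ?_ ?_
  all_goals simp (disch := omega) [List.nodup_append, List.Ico.nodup, List.Ico.mem,
    List.isChain_append, hC.1.isChain_Ico_reverse, hC.1.isChain_Ico, List.Ico.getLast?_succ,
    List.Ico.head?_of_lt, Nat.cast_add, *]
  all_goals and_intros <;> intros <;> omega

theorem le_of_adj_add_two_of_crossing (hC : IsLongestCycleMap G f) (hh : h ∉ Set.range f)
    {a b c q : ℕ} (hba : b ≤ a) (haq : a + 1 < q) (hqc : q < c + n) (hb : G.Adj h (f b))
    (hc : G.Adj h (f c)) (hbx : G.Adj (f (b + 1)) (f (q + 1)))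
    (hax : G.Adj (f (a + 1)) (f q)) (hwc : G.Adj (f (a + 2)) (f (c + 1))) : b ≤ c := by
  by_contra! hcb
  have := hC.1.1
  have := hbx.symm
  refine hC.false_of_extension hh (I := (List.Ico (q + 1) (c + n + 1)).reverse ++
    (List.Ico (b + 1) (a + 2) ++ ((List.Ico (a + 2) (q + 1)).reverse ++ List.Ico (c + 1) (b + 1))))
    (c + 1) ?_ ?_ ?_ ?_ ?_ ?_
  all_goals simp (disch := omega) [List.nodup_append, List.Ico.nodup, List.Ico.mem,
    List.isChain_append, hC.1.isChain_Ico_reverse, hC.1.isChain_Ico, List.Ico.getLast?_succ,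
    List.Ico.head?_of_lt, Nat.cast_add, *]
  all_goals and_intros <;> intros <;> omega

theorem isIndep_insert_range_succ (hC : IsLongestCycleMap G f) (hh : h ∉ Set.range f)
    {ι : Type*} {p : ι → ℕ} (hpn : ∀ i, p i < n) (hv : ∀ i, G.Adj h (f (p i))) :
    IsIndep G (insert h (Set.range fun i => f (p i + 1))) := by
  rintro _ (rfl | ⟨i, rfl⟩) _ (rfl | ⟨j, rfl⟩)
  · exact G.irrefl
  · exact hC.not_adj_succ hh (hv j)
  · exact fun hih => hC.not_adj_succ hh (hv i) hih.symm
  · rcases lt_trichotomy (p i) (p j) with hij | hij | hij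
    · exact fun hji => hC.not_adj_succ_succ hh hij (by have := hpn j; omega) (hv i) (hv j) hji.symm
    · simp only [hij]
      exact G.irrefl
    · exact hC.not_adj_succ_succ hh hij (by have := hpn i; omega) (hv j) (hv i)

theorem add_two_notMem_range_succ (hC : IsLongestCycleMap G f) (hh : h ∉ Set.range f)
    {ι : Type*} {p : ι → ℕ} (hpn : ∀ i, p i + 1 < n) (hv : ∀ i, G.Adj h (f (p i))) {a : ℕ}
    (han : a + 2 < n) (ha : G.Adj h (f a)) : f (a + 2) ∉ Set.range fun i => f (p i + 1) := by
  rintro ⟨i, hi⟩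
  have := (hC.1.natCast_inj (hpn i) han).1 (by simpa using hi)
  exact hC.not_adj_succ hh ha (by simpa [show p i = a + 1 by omega] using hv i)

end IsLongestCycleMap

namespace P2kP1Free

variable {k : ℕ}

theorem ncard_lt_ncard_neighborSet_inter_add (hG : P2kP1Free G k) {I : Set V}
    (hfin : I.Finite) (hI : IsIndep G I) {y u : V} (hu : u ∈ I) (hy : y ∉ I)
    (hyu : G.Adj y u) : I.ncard < (G.neighborSet y ∩ I).ncard + k := by
  have hsplit := Set.ncard_inter_add_ncard_sdiff_eq_ncard I (G.neighborSet y) hfin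
  rw [Set.inter_comm] at hsplit
  by_contra! hk
  obtain ⟨Z, hZ, hZk⟩ := Set.exists_subset_card_eq (s := I \ G.neighborSet y) (n := k) (by omega)
  have : Finite Z := (hfin.sdiff.subset hZ).to_subtype
  let z : Fin k → V := fun i =>
    ((Finite.equivFinOfCardEq (by rwa [Nat.card_coe_set_eq])).symm i : Z)
  have hzI : ∀ i, z i ∈ I \ G.neighborSet y := fun i => hZ (Subtype.prop _)
  refine hG ⟨y, u, z, Subtype.val_injective.comp (Equiv.injective _), fun i => ?_, fun i => ?_,
    hyu.ne, hyu, fun i => (hzI i).2, fun i => hI u hu _ (hzI i).1,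
    fun i j => hI _ (hzI i).1 _ (hzI j).1⟩
  · rintro hzy; exact hy (hzy ▸ (hzI i).1)
  · rintro hzu; exact (hzI i).2 (hzu ▸ hyu)

theorem ncard_add_one_lt_ncard_neighborSet_inter_add (hG : P2kP1Free G k) {I : Set V}
    (hfin : I.Finite) {h : V} (hI : IsIndep G (insert h I)) (hhI : h ∉ I) {y u : V} (hu : u ∈ I)
    (hy : y ∉ I) (hyh : y ≠ h) (hyu : G.Adj y u) (hyh_nadj : ¬ G.Adj y h) :
    I.ncard + 1 < (G.neighborSet y ∩ I).ncard + k := by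
  have := hG.ncard_lt_ncard_neighborSet_inter_add (hfin.insert h) hI (Set.mem_insert_of_mem _ hu)
    (by simp [hy, hyh]) hyu
  rwa [Set.ncard_insert_of_notMem hhI hfin,
    Set.inter_insert_of_notMem (show h ∉ G.neighborSet y from hyh_nadj)] at this

end P2kP1Free

end

theorem stmt_12_general {V : Type*} (k : ℕ) (G : SimpleGraph V)
    (hfree : P2kP1Free G k)
    (n : ℕ) (f : ZMod n → V) (hC : IsLongestCycleMap G f)
    (h : V) (hh : h ∉ Set.range f)
    (d : ℕ) (hkd : k ≤ d)
    (p : Fin d → ℕ) (hmono : StrictMono p)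
    (hpn : ∀ i, p i + 1 < n)
    (hrange : G.neighborSet h = Set.range (fun i : Fin d => f ((p i : ZMod n))))
    (U : Set V) (hU : U = Set.range (fun i : Fin d => f ((p i : ZMod n) + 1)))
    (q : ℕ) (hq : q < n) (hqgt : ∀ i : Fin d, p i + 1 < q)
    (x : V) (hx : x = f (q : ZMod n))
    (hxN : x ∈ setNbhd G U) (hx1N : f ((q : ZMod n) + 1) ∈ setNbhd G U)
    (lx : Fin d) (hlx : G.Adj (f ((p lx : ZMod n) + 1)) x)
    (hlxmin : ∀ i : Fin d, G.Adj (f ((p i : ZMod n) + 1)) x → lx ≤ i)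
    (rx : Fin d) (hrx : G.Adj (f ((p rx : ZMod n) + 1)) (f ((q : ZMod n) + 1)))
    (hrxmax : ∀ i : Fin d, G.Adj (f ((p i : ZMod n) + 1)) (f ((q : ZMod n) + 1)) → i ≤ rx) :
    -- (i)
    ((∀ w ∈ G.neighborSet x ∩ U, ∃ i : Fin d, lx ≤ i ∧ w = f ((p i : ZMod n) + 1)) ∧
      d - k + 2 ≤ (G.neighborSet x ∩ U).ncard) ∧
    -- (ii)
    ((∀ w ∈ G.neighborSet (f ((q : ZMod n) + 1)) ∩ U,
        ∃ i : Fin d, i ≤ rx ∧ w = f ((p i : ZMod n) + 1)) ∧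
      d - k + 1 ≤ (G.neighborSet (f ((q : ZMod n) + 1)) ∩ U).ncard) ∧
    -- (iii)
    (rx ≤ lx ∧ f ((p lx : ZMod n) + 2) ∉ G.neighborSet h ∧
      (∀ w ∈ G.neighborSet (f ((p lx : ZMod n) + 2)) ∩ U,
        ∃ i : Fin d, rx ≤ i ∧ i ≤ lx ∧ w = f ((p i : ZMod n) + 1)) ∧
      d - k + 2 ≤ (G.neighborSet (f ((p lx : ZMod n) + 2)) ∩ U).ncard) := by
  subst hx hU
  have hv : ∀ i, G.Adj h (f (p i)) := fun i => (Set.ext_iff.1 hrange _).2 ⟨i, rfl⟩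
  have hind := hC.isIndep_insert_range_succ hh (fun i => (hpn i).trans' (by omega)) hv
  have hhU : h ∉ Set.range fun i => f (p i + 1) := fun ⟨i, hi⟩ => hh ⟨_, hi⟩
  have hcard : (Set.range fun i => f (p i + 1)).ncard = d := by
    simpa using hC.1.ncard_range_succ hmono.injective hpn
  have hrl : rx ≤ lx :=
    hmono.le_iff_le.1 <|
      hC.le_of_crossing hh (Nat.lt_of_succ_lt (hqgt rx)) (by omega) (hv lx) (hv rx) hrx hlx
  have hprl := hmono.monotone hrl
  have hw : ¬ G.Adj h (f (p lx + 2)) :=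
    hC.not_adj_add_two_of_crossing hh hprl (hqgt lx) (by omega) (hv rx) hrx hlx
  have hxh : ¬ G.Adj (f q) h := fun hxh => by
    obtain ⟨i, hi⟩ := (Set.ext_iff.1 hrange _).1 hxh.symm
    have := (hC.1.natCast_inj (hpn i |>.trans' (by omega)) hq).1 hi
    exact absurd (hqgt i) (by omega)
  have hwU := hC.add_two_notMem_range_succ hh hpn hv (by have := hqgt lx; omega) (hv lx)
  have hwu : G.Adj (f (p lx + 2)) (f (p lx + 1)) := by
    simpa [add_assoc, one_add_one_eq_two] using (hC.1.2.2 (p lx + 1)).symm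
  refine ⟨⟨?_, ?_⟩, ⟨?_, ?_⟩, hrl, hw, ?_, ?_⟩
  · rintro _ ⟨hadj, i, rfl⟩
    exact ⟨i, hlxmin i hadj.symm, rfl⟩
  · have := hfree.ncard_add_one_lt_ncard_neighborSet_inter_add (Set.finite_range _) hind hhU
      ⟨lx, rfl⟩ hxN.1 (fun hxh => hh ⟨_, hxh⟩) hlx.symm hxh
    omega
  · rintro _ ⟨hadj, i, rfl⟩
    exact ⟨i, hrxmax i hadj.symm, rfl⟩
  · have := hfree.ncard_lt_ncard_neighborSet_inter_add (Set.finite_range _)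
      (fun a ha b hb => hind a (Set.mem_insert_of_mem h ha) b (Set.mem_insert_of_mem h hb))
      ⟨rx, rfl⟩ hx1N.1 hrx.symm
    omega
  · rintro _ ⟨hwi, i, rfl⟩
    refine ⟨i, hmono.le_iff_le.1 ?_, hmono.le_iff_le.1 ?_, rfl⟩
    · exact hC.le_of_adj_add_two_of_crossing hh hprl (hqgt lx) (by omega) (hv rx) (hv i) hrx hlx hwi
    · exact hC.le_of_crossing_of_adj_add_two hh hprl (Nat.lt_of_succ_lt (hqgt i)) (by omega)
        (hv rx) (hv i) hrx hlx hwi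
  · have := hfree.ncard_add_one_lt_ncard_neighborSet_inter_add (Set.finite_range _) hind hhU
      ⟨lx, rfl⟩ hwU (fun hwh => hh ⟨_, hwh⟩) hwu (fun hwh => hw hwh.symm)
    omega

/-- Claim 3.7: `G` is `(P₂ ∪ kP₁)`-free with `k ≥ 4`, `C` is a longest
cycle (parametrised by `f : ZMod n → V`, relabelled so that `v₁ = f 0`), `h ∉ V(C)` with
`N_G(h) ⊆ V(C)` and `d = |N_G(h)| ≥ k`.  The neighbours of `h` are `v_i = f (p i)` with
`p` strictly increasing and `p 0 = 0`; `u_i = f (p i + 1)` and `U = {u_i}`.  The vertex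
`x = f q` lies on the arc from `u_d⁺` to `v₁⁻` (i.e. `p i + 1 < q < n` for all `i`) and
`x, x⁺ ∈ N_G(U)`.  With `l_x` the least index with `u_{l_x} x ∈ E(G)` and `r_x` the
greatest index with `u_{r_x} x⁺ ∈ E(G)`:
(i) `N_G(x) ∩ U ⊆ {u_i : i ≥ l_x}` and `|N_G(x) ∩ U| ≥ d - k + 2`;
(ii) `N_G(x⁺) ∩ U ⊆ {u_i : i ≤ r_x}` and `|N_G(x⁺) ∩ U| ≥ d - k + 1`;
(iii) `r_x ≤ l_x`, `u_{l_x}⁺ ∉ N_G(h)`, `N_G(u_{l_x}⁺) ∩ U ⊆ {u_i : r_x ≤ i ≤ l_x}` and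
`|N_G(u_{l_x}⁺) ∩ U| ≥ d - k + 2`. -/
theorem stmt_12 {V : Type*} [Fintype V] (k : ℕ) (hk : 4 ≤ k) (G : SimpleGraph V)
    (hfree : P2kP1Free G k)
    (n : ℕ) (f : ZMod n → V) (hC : IsLongestCycleMap G f)
    (h : V) (hh : h ∉ Set.range f) (hNh : G.neighborSet h ⊆ Set.range f)
    (d : ℕ) (hkd : k ≤ d)
    (p : Fin d → ℕ) (hmono : StrictMono p) (hp0 : ∀ i₀ : Fin d, (i₀ : ℕ) = 0 → p i₀ = 0)
    (hpn : ∀ i, p i + 1 < n)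
    (hrange : G.neighborSet h = Set.range (fun i : Fin d => f ((p i : ZMod n))))
    (U : Set V) (hU : U = Set.range (fun i : Fin d => f ((p i : ZMod n) + 1)))
    (q : ℕ) (hq : q < n) (hqgt : ∀ i : Fin d, p i + 1 < q)
    (x : V) (hx : x = f (q : ZMod n))
    (hxN : x ∈ setNbhd G U) (hx1N : f ((q : ZMod n) + 1) ∈ setNbhd G U)
    (lx : Fin d) (hlx : G.Adj (f ((p lx : ZMod n) + 1)) x)
    (hlxmin : ∀ i : Fin d, G.Adj (f ((p i : ZMod n) + 1)) x → lx ≤ i)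
    (rx : Fin d) (hrx : G.Adj (f ((p rx : ZMod n) + 1)) (f ((q : ZMod n) + 1)))
    (hrxmax : ∀ i : Fin d, G.Adj (f ((p i : ZMod n) + 1)) (f ((q : ZMod n) + 1)) → i ≤ rx) :
    -- (i)
    ((∀ w ∈ G.neighborSet x ∩ U, ∃ i : Fin d, lx ≤ i ∧ w = f ((p i : ZMod n) + 1)) ∧
      d - k + 2 ≤ (G.neighborSet x ∩ U).ncard) ∧
    -- (ii)
    ((∀ w ∈ G.neighborSet (f ((q : ZMod n) + 1)) ∩ U,
        ∃ i : Fin d, i ≤ rx ∧ w = f ((p i : ZMod n) + 1)) ∧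
      d - k + 1 ≤ (G.neighborSet (f ((q : ZMod n) + 1)) ∩ U).ncard) ∧
    -- (iii)
    (rx ≤ lx ∧ f ((p lx : ZMod n) + 2) ∉ G.neighborSet h ∧
      (∀ w ∈ G.neighborSet (f ((p lx : ZMod n) + 2)) ∩ U,
        ∃ i : Fin d, rx ≤ i ∧ i ≤ lx ∧ w = f ((p i : ZMod n) + 1)) ∧
      d - k + 2 ≤ (G.neighborSet (f ((p lx : ZMod n) + 2)) ∩ U).ncard) :=
  stmt_12_general k G hfree n f hC h hh d hkd p hmono hpn hrange U hU q hq hqgt x hx hxN hx1N lx hlx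
    hlxmin rx hrx hrxmax
end
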